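/- arXiv:1310.4043 — 4 statements merged into one kernel-verified Lean document; each statement's English description precedes it below -/
import Mathlib

section
/- Let (g, ≺) be a maximally delayed gflow of an open graph (G, I, O). Then the last layer V_0^≺ equals the output set O. -/
variable {V : Type*} [Fintype V] [DecidableEq V]

/-- The odd neighborhood of a vertex set `S`: vertices adjacent to an odd
number of vertices of `S`. -/
def oddNbhd (G : SimpleGraph V) [DecidableRel G.Adj] (S : Finset V) : Finset V :=
  Finset.univ.filter fun v => Odd ((S.filter fun u => G.Adj v u).card)

/-- A generalized flow (gflow) on the open graph `(G, I, O)`. -/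
structure IsGflow (G : SimpleGraph V) [DecidableRel G.Adj] (I O : Finset V)
    (g : V → Finset V) (r : V → V → Prop) : Prop where
  strict : IsStrictOrder V r
  notInput : ∀ u, u ∉ O → ∀ v ∈ g u, v ∉ I
  g1 : ∀ u, u ∉ O → ∀ v ∈ g u, r u v
  g2 : ∀ u, u ∉ O → u ∈ oddNbhd G (g u)
  g3 : ∀ u, u ∉ O → ∀ v ∈ oddNbhd G (g u), v = u ∨ r u v

/-- `maxSet r X` is the set of `r`-maximal elements of `X`. -/
noncomputable def maxSet (r : V → V → Prop) (X : Finset V) : Finset V :=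
  @Finset.filter _ (fun u => ∀ v ∈ X, ¬ r u v) (Classical.decPred _) X

/-- Union of the first `k` layers of the strict partial order `r`. -/
noncomputable def usedUpTo (r : V → V → Prop) : ℕ → Finset V
  | 0 => ∅
  | k + 1 => usedUpTo r k ∪ maxSet r (Finset.univ \ usedUpTo r k)

/-- The `k`-th layer `V_k^≺`, obtained by iterated maximization. -/
noncomputable def layer (r : V → V → Prop) (k : ℕ) : Finset V :=
  maxSet r (Finset.univ \ usedUpTo r k)

/-- `(·, r)` is more delayed than `(·, r')`. -/
noncomputable def MoreDelayed (r r' : V → V → Prop) : Prop :=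
  (∀ k, (usedUpTo r' (k + 1)).card ≤ (usedUpTo r (k + 1)).card) ∧
  ∃ k, (usedUpTo r' (k + 1)).card < (usedUpTo r (k + 1)).card

/-- A gflow is maximally delayed if no gflow of the same open graph is more
delayed than it. -/
noncomputable def MaximallyDelayed (G : SimpleGraph V) [DecidableRel G.Adj]
    (I O : Finset V) (g : V → Finset V) (r : V → V → Prop) : Prop :=
  IsGflow G I O g r ∧
    ∀ (g' : V → Finset V) (r' : V → V → Prop), IsGflow G I O g' r' →
      ¬ MoreDelayed r' r

/-!
Every non-output vertex `u` of a gflow has a successor (by (g2), `g u` is nonempty, and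
`u ≺ v` for `v ∈ g u` by (g1)), so the last layer contains only outputs. Conversely, if some
output `o` were missing from the last layer, forgetting all constraints `o' ≺ v` with `o'` an
output still gives a gflow, since outputs never occur on the left of (g1)–(g3). Shrinking the
order can only enlarge each union of the first `k` layers, and it puts `o` into the last one,
so the new gflow is strictly more delayed.
-/

omit [Fintype V] [DecidableEq V] in
lemma mem_maxSet {r : V → V → Prop} {X : Finset V} {u : V} :
    u ∈ maxSet r X ↔ u ∈ X ∧ ∀ v ∈ X, ¬ r u v :=
  @Finset.mem_filter _ _ (Classical.decPred _) _ _

lemma usedUpTo_one (r : V → V → Prop) : usedUpTo r 1 = layer r 0 := by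
  simp only [usedUpTo, layer, Finset.empty_union]

lemma mem_layer_zero {r : V → V → Prop} {u : V} :
    u ∈ layer r 0 ↔ ∀ v, ¬ r u v := by
  simp [layer, usedUpTo, mem_maxSet]

lemma usedUpTo_subset_of_le {r r' : V → V → Prop} (hle : r' ≤ r) :
    ∀ k, usedUpTo r k ⊆ usedUpTo r' k
  | 0 => subset_rfl
  | k + 1 => by
    intro u hu
    simp only [usedUpTo, Finset.mem_union, mem_maxSet, Finset.mem_sdiff,
      Finset.mem_univ, true_and] at hu ⊢
    by_cases hu' : u ∈ usedUpTo r' k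
    · exact Or.inl hu'
    · rcases hu with hu | ⟨-, hmax⟩
      · exact absurd (usedUpTo_subset_of_le hle k hu) hu'
      · exact Or.inr ⟨hu', fun v hv hrv =>
          hmax v (fun hvk => hv (usedUpTo_subset_of_le hle k hvk)) (hle u v hrv)⟩

lemma layer_zero_subset_of_le {r r' : V → V → Prop} (hle : r' ≤ r) :
    layer r 0 ⊆ layer r' 0 := fun _ hu =>
  mem_layer_zero.mpr fun v huv => mem_layer_zero.mp hu v (hle _ v huv)

lemma moreDelayed_of_le_of_layer_zero_ssubset {r r' : V → V → Prop} (hle : r' ≤ r)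
    (hlt : layer r 0 ⊂ layer r' 0) : MoreDelayed r' r :=
  ⟨fun k => Finset.card_le_card (usedUpTo_subset_of_le hle (k + 1)),
    0, Finset.card_lt_card (by rwa [zero_add, usedUpTo_one, usedUpTo_one])⟩

namespace IsGflow

variable {G : SimpleGraph V} [DecidableRel G.Adj] {I O : Finset V} {g : V → Finset V}
  {r : V → V → Prop}

lemma layer_zero_subset (hg : IsGflow G I O g r) : layer r 0 ⊆ O := by
  intro u hu
  by_contra huO
  have hodd := hg.g2 u huO
  simp only [oddNbhd, Finset.mem_filter, Finset.mem_univ, true_and] at hodd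
  obtain ⟨v, hv⟩ := Finset.card_pos.mp hodd.pos
  exact mem_layer_zero.mp hu v (hg.g1 u huO v (Finset.mem_filter.mp hv).1)

omit [DecidableEq V] in
lemma restrict_outputs (hg : IsGflow G I O g r) :
    IsGflow G I O g (fun u v => r u v ∧ u ∉ O) where
  strict :=
    { irrefl := fun u hu => hg.strict.irrefl u hu.1
      trans := fun _ _ _ huv hvw => ⟨hg.strict.trans _ _ _ huv.1 hvw.1, huv.2⟩ }
  notInput := hg.notInput
  g1 u huO v hv := ⟨hg.g1 u huO v hv, huO⟩
  g2 := hg.g2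
  g3 u huO v hv := (hg.g3 u huO v hv).imp_right fun huv => ⟨huv, huO⟩

end IsGflow

theorem maximallyDelayed_layer_zero (G : SimpleGraph V) [DecidableRel G.Adj]
    (I O : Finset V) (g : V → Finset V) (r : V → V → Prop)
    (h : MaximallyDelayed G I O g r) : layer r 0 = O := by
  obtain ⟨hg, hmax⟩ := h
  refine hg.layer_zero_subset.antisymm fun o hoO => ?_
  by_contra ho
  set r' : V → V → Prop := fun u v => r u v ∧ u ∉ O
  have hle : r' ≤ r := fun _ _ huv => huv.1
  have ho' : o ∈ layer r' 0 := mem_layer_zero.mpr fun _ hov => hov.2 hoO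
  have hlt : layer r 0 ⊂ layer r' 0 :=
    (Finset.ssubset_iff_of_subset (layer_zero_subset_of_le hle)).mpr ⟨o, ho', ho⟩
  exact hmax g r' hg.restrict_outputs (moreDelayed_of_le_of_layer_zero_ssubset hle hlt)
end

section
/- If an open graph (G, I, O) has a gflow, then |I| ≤ |O|. -/
variable {V : Type*} [Fintype V] [DecidableEq V]

lemma even_cast_zmod2 {k : ℕ} (h : Even k) : (k : ZMod 2) = 0 := by
  obtain ⟨m, rfl⟩ := h
  push_cast
  ring_nf
  rw [show (2 : ZMod 2) = 0 from rfl]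
  ring

lemma odd_cast_zmod2 {k : ℕ} (h : Odd k) : (k : ZMod 2) = 1 := by
  obtain ⟨m, rfl⟩ := h
  push_cast
  rw [show (2 : ZMod 2) = 0 from rfl]
  ring

lemma sum_mul_swap {α β : Type*} [Fintype α] [Fintype β]
    (a : β → ZMod 2) (c : α → ZMod 2) (b : α → β → ZMod 2) :
    (∑ u : α, c u * ∑ v : β, a v * b u v)
    = ∑ v : β, a v * ∑ u : α, c u * b u v := by
  simp_rw [Finset.mul_sum]
  rw [Finset.sum_comm]
  exact Finset.sum_congr rfl fun v _ => Finset.sum_congr rfl fun u _ => by ring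

theorem input_card_le_output_card (G : SimpleGraph V) [DecidableRel G.Adj]
    (I O : Finset V) (g : V → Finset V) (r : V → V → Prop)
    (h : IsGflow G I O g r) : I.card ≤ O.card := by
  classical
  haveI := h.strict
  -- the family of indicator vectors of g(u), u ∈ Oᶜ, in (ZMod 2)^{Iᶜ}
  set f : (Oᶜ : Finset V) → ((Iᶜ : Finset V) → ZMod 2) :=
    fun u v => if (v : V) ∈ g u then 1 else 0 with hf
  have hsubset : ∀ u : (Oᶜ : Finset V), g ↑u ⊆ (Iᶜ : Finset V) := by
    intro u v hv
    exact Finset.mem_compl.2 (h.notInput u (Finset.mem_compl.1 u.2) v hv)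
  have hli : LinearIndependent (ZMod 2) f := by
    rw [Fintype.linearIndependent_iff]
    intro c hsum
    by_contra hc
    push_neg at hc
    -- support set in V
    set S : Set V := {v | ∃ hv : v ∈ (Oᶜ : Finset V), c ⟨v, hv⟩ ≠ 0} with hS
    have hSne : S.Nonempty := by
      obtain ⟨u, hu⟩ := hc
      exact ⟨↑u, u.2, by simpa using hu⟩
    have wf : WellFounded r := Finite.wellFounded_of_trans_of_irrefl r
    obtain ⟨m, hmS, hmin⟩ := wf.has_min S hSne
    obtain ⟨hmO, hcm⟩ := hmS
    set um : (Oᶜ : Finset V) := ⟨m, hmO⟩ with hum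
    -- per-coordinate equation
    have hcoord : ∀ v : (Iᶜ : Finset V),
        (∑ u : (Oᶜ : Finset V), c u * (if (v : V) ∈ g ↑u then 1 else 0)) = 0 := by
      intro v
      have := congrFun hsum v
      simpa [hf, Finset.sum_apply, smul_eq_mul] using this
    -- for each u, sum over Iᶜ of adjacency·membership indicators = card of filter
    have hcard : ∀ u : (Oᶜ : Finset V),
        (∑ v : (Iᶜ : Finset V),
          (if G.Adj m (v : V) then (1 : ZMod 2) else 0) *
            (if (v : V) ∈ g ↑u then 1 else 0))
        = ((((g ↑u).filter (fun w => G.Adj m w)).card : ℕ) : ZMod 2) := by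
      intro u
      rw [Finset.sum_coe_sort (Iᶜ : Finset V)
        (fun v => (if G.Adj m v then (1 : ZMod 2) else 0) *
          (if v ∈ g ↑u then 1 else 0))]
      rw [Finset.card_filter]
      push_cast
      rw [← Finset.sum_subset (hsubset u)]
      · apply Finset.sum_congr rfl
        intro v hv
        simp [hv, mul_comm]
      · intro v _ hv
        simp [hv]
    -- the double sum, two ways
    have key : (∑ u : (Oᶜ : Finset V),
        c u * ((((g ↑u).filter (fun w => G.Adj m w)).card : ℕ) : ZMod 2)) = 0 := by
      calc (∑ u : (Oᶜ : Finset V),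
          c u * ((((g ↑u).filter (fun w => G.Adj m w)).card : ℕ) : ZMod 2))
          = ∑ u : (Oᶜ : Finset V),
            c u * ∑ v : (Iᶜ : Finset V),
              (if G.Adj m (v : V) then (1 : ZMod 2) else 0) *
                (if (v : V) ∈ g ↑u then 1 else 0) :=
            Finset.sum_congr rfl fun u _ => by rw [hcard u]
        _ = ∑ v : (Iᶜ : Finset V),
              (if G.Adj m (v : V) then (1 : ZMod 2) else 0) *
                ∑ u : (Oᶜ : Finset V), c u * (if (v : V) ∈ g ↑u then 1 else 0) :=
            sum_mul_swap _ _ _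
        _ = 0 := Finset.sum_eq_zero fun v _ => by rw [hcoord v, mul_zero]
    -- evaluate the sum: only the u = um term survives
    have heval : (∑ u : (Oᶜ : Finset V),
        c u * ((((g ↑u).filter (fun w => G.Adj m w)).card : ℕ) : ZMod 2)) = c um := by
      rw [Finset.sum_eq_single um]
      · have hodd : Odd (((g m).filter (fun w => G.Adj m w)).card) := by
          have := h.g2 m (Finset.mem_compl.1 hmO)
          simpa [oddNbhd] using this
        rw [odd_cast_zmod2 hodd, mul_one]
      · intro u _ hne
        rcases Nat.even_or_odd (((g ↑u).filter (fun w => G.Adj m w)).card) with he | ho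
        · rw [even_cast_zmod2 he, mul_zero]
        · -- m ∈ Odd(g u), so m = u or r u m
          have hmem : m ∈ oddNbhd G (g ↑u) := by
            simp [oddNbhd, ho]
          rcases h.g3 ↑u (Finset.mem_compl.1 u.2) m hmem with heq | hr
          · exact absurd (Subtype.ext heq.symm) hne
          · -- r u m : if c u ≠ 0 then u ∈ S contradicts minimality
            by_cases hcu : c u = 0
            · rw [hcu, zero_mul]
            · exact absurd hr (hmin ↑u ⟨u.2, by simpa using hcu⟩)
      · intro hnm
        exact absurd (Finset.mem_univ um) hnm
    rw [heval] at key
    exact hcm key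
  -- linear independence gives the cardinality bound
  have hcard : Fintype.card (Oᶜ : Finset V) ≤ Fintype.card (Iᶜ : Finset V) := by
    have := hli.fintype_card_le_finrank
    simpa [Module.finrank_pi] using this
  rw [Fintype.card_coe, Fintype.card_coe, Finset.card_compl, Finset.card_compl] at hcard
  have hI : I.card ≤ Fintype.card V := I.card_le_univ
  have hO : O.card ≤ Fintype.card V := O.card_le_univ
  omega
end

section
/- If an open graph (G, I, O) has a gflow, then it has a path cover: a collection of vertex-disjoint directed paths in G covering all vertices, such that each path intersects I at most at its initial vertex and intersects O exactly at its final vertex. Moreover each edge of these paths can be chosen to be a real gflow edge of some gflow on (G, I, O), i.e., an edge (x, y) with y ∈ g(x). -/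
variable {V : Type*} [Fintype V] [DecidableEq V]

/-!
Extend the gflow order to a linear order `≤`. For a set `s` of non-outputs, let `Y` be the set of
neighbours `y` of some `m ∈ s` with `y ∈ g u` for a non-output `u ≥ m`. Over `𝔽₂` the vectors
`g v ∩ Y` (`v ∈ s`) are linearly independent: summing a vector over the neighbourhood of `m`
gives the parity of `N(m) ∩ g v`, which is `1` for `v = m` and `0` for `v > m` by (g-2) and (g-3).
Hence `|s| ≤ |Y|`, and Hall's theorem yields an injective choice of neighbours `f v ∈ g u` with
`u ≥ v`. Replacing `g v` by `g v ∆ g u` when `u > v` keeps a gflow and puts `f v` into `g v`.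
Then `f` is an injective, increasing successor map on the non-outputs, and following it from the
vertices outside its range produces the path cover.
-/

open Finset Relation
open scoped symmDiff

theorem Finset.odd_card_symmDiff_iff {α : Type*} [DecidableEq α] (s t : Finset α) :
    Odd #(s ∆ t) ↔ ¬(Odd #s ↔ Odd #t) := by
  have h_union := card_union_add_card_inter s t
  have h_inter := card_le_card (inter_subset_union (s := s) (t := t))
  have h_symmDiff : #(s ∆ t) = #(s ∪ t) - #(s ∩ t) := by
    rw [symmDiff_eq_sup_sdiff_inf]
    exact card_sdiff_of_subset inter_subset_union
  simp only [Nat.odd_iff]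
  omega

theorem linearIndependent_of_triangular {ι R M : Type*} [LinearOrder ι] [Ring R]
    [NoZeroDivisors R] [AddCommGroup M] [Module R M] (x : ι → M) (φ : ι → M →ₗ[R] R)
    (h_diag : ∀ i, φ i (x i) ≠ 0) (h_lt : ∀ i j, i < j → φ i (x j) = 0) :
    LinearIndependent R x := by
  classical
  rw [linearIndependent_iff']
  intro t c hc i hi
  by_contra hci
  have hT : (t.filter (c · ≠ 0)).Nonempty := ⟨i, mem_filter.mpr ⟨hi, hci⟩⟩
  set m := (t.filter (c · ≠ 0)).min' hT
  obtain ⟨hmt, hcm⟩ := mem_filter.mp ((t.filter (c · ≠ 0)).min'_mem hT)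
  have h_eval : φ m (∑ j ∈ t, c j • x j) = c m * φ m (x m) := by
    rw [map_sum, sum_eq_single_of_mem m hmt]
    · simp
    intro j hjt hjm
    rcases lt_or_gt_of_ne hjm with hjm | hmj
    · have : c j = 0 := by
        by_contra hcj
        exact (min'_le _ j (mem_filter.mpr ⟨hjt, hcj⟩)).not_gt hjm
      simp [this]
    · simp [h_lt m j hmj]
  rw [hc, map_zero] at h_eval
  exact mul_ne_zero hcm (h_diag m) h_eval.symm

theorem exists_linearOrder_extending {α : Type*} (r : α → α → Prop) [IsStrictOrder α r] :
    ∃ L : LinearOrder α, ∀ a b, r a b → L.lt a b := by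
  let := partialOrderOfSO r
  refine ⟨(inferInstance : LinearOrder (LinearExtension α)), fun a b hab => ?_⟩
  refine (toLinearExtension.monotone (Or.inr hab)).lt_of_ne ?_
  rintro rfl
  exact irrefl a hab

section PathCover

variable {α : Type*} [LinearOrder α] {O : Finset α}

def SuccRel (f : {v // v ∉ O} → α) (x y : α) : Prop := ∃ h : x ∉ O, f ⟨x, h⟩ = y

def pathFrom [Finite α] (f : {v // v ∉ O} → α) (hf : ∀ v, v.1 < f v) (v : α) : List α :=
  if h : v ∈ O then [v] else v :: pathFrom f hf (f ⟨v, h⟩)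
termination_by (Set.Ioi v).ncard
decreasing_by exact Set.ncard_lt_ncard (Set.Ioi_ssubset_Ioi_iff.mpr (hf ⟨v, h⟩)) (Set.toFinite _)

variable {f : {v // v ∉ O} → α} (hf : ∀ v, v.1 < f v)

include hf in
theorem SuccRel.lt {x y : α} : SuccRel f x y → x < y := by
  rintro ⟨hx, rfl⟩
  exact hf ⟨x, hx⟩

variable [Finite α]

theorem pathFrom_of_mem {v : α} (hv : v ∈ O) : pathFrom f hf v = [v] := by
  rw [pathFrom, dif_pos hv]

theorem pathFrom_of_notMem {v : α} (hv : v ∉ O) :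
    pathFrom f hf v = v :: pathFrom f hf (f ⟨v, hv⟩) := by
  rw [pathFrom, dif_neg hv]

theorem exists_pathFrom_eq_cons (v : α) : ∃ t, pathFrom f hf v = v :: t := by
  by_cases hv : v ∈ O
  · exact ⟨[], pathFrom_of_mem hf hv⟩
  · exact ⟨_, pathFrom_of_notMem hf hv⟩

theorem mem_pathFrom_iff {v x : α} : x ∈ pathFrom f hf v ↔ ReflTransGen (SuccRel f) v x := by
  rw [ReflTransGen.cases_head_iff]
  induction v using pathFrom.induct f hf with
  | case1 v hv => simp [pathFrom_of_mem hf hv, SuccRel, hv, eq_comm]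
  | case2 v hv ih =>
    rw [pathFrom_of_notMem hf hv, List.mem_cons, ih, ← ReflTransGen.cases_head_iff]
    simp [SuccRel, hv, eq_comm]

theorem isChain_pathFrom (v : α) : (pathFrom f hf v).IsChain (SuccRel f) := by
  induction v using pathFrom.induct f hf with
  | case1 v hv => simp [pathFrom_of_mem hf hv]
  | case2 v hv ih =>
    obtain ⟨t, ht⟩ := exists_pathFrom_eq_cons hf (f ⟨v, hv⟩)
    rw [pathFrom_of_notMem hf hv, ht, List.isChain_cons_cons, ← ht]
    exact ⟨⟨hv, rfl⟩, ih⟩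

theorem nodup_pathFrom (v : α) : (pathFrom f hf v).Nodup :=
  ((isChain_pathFrom hf v).imp fun _ _ => SuccRel.lt hf).pairwise.nodup

theorem getLast?_pathFrom (v : α) : ∃ o ∈ O, (pathFrom f hf v).getLast? = some o := by
  induction v using pathFrom.induct f hf with
  | case1 v hv => exact ⟨v, hv, by rw [pathFrom_of_mem hf hv]; rfl⟩
  | case2 v hv ih =>
    obtain ⟨t, ht⟩ := exists_pathFrom_eq_cons hf (f ⟨v, hv⟩)
    rwa [pathFrom_of_notMem hf hv, ht, List.getLast?_cons_cons, ← ht]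

theorem notMem_of_mem_dropLast_pathFrom {v x : α} (hx : x ∈ (pathFrom f hf v).dropLast) :
    x ∉ O := by
  induction v using pathFrom.induct f hf with
  | case1 v hv => simp [pathFrom_of_mem hf hv] at hx
  | case2 v hv ih =>
    obtain ⟨t, ht⟩ := exists_pathFrom_eq_cons hf (f ⟨v, hv⟩)
    rw [pathFrom_of_notMem hf hv, ht, List.dropLast_cons_cons, ← ht, List.mem_cons] at hx
    rcases hx with rfl | hx
    exacts [hv, ih hx]

theorem mem_range_of_mem_tail_pathFrom {v x : α} (hx : x ∈ (pathFrom f hf v).tail) :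
    x ∈ Set.range f := by
  by_cases hv : v ∈ O
  · simp [pathFrom_of_mem hf hv] at hx
  · rw [pathFrom_of_notMem hf hv, List.tail_cons, mem_pathFrom_iff] at hx
    obtain rfl | ⟨c, -, hc, rfl⟩ := hx.cases_tail
    exacts [⟨_, rfl⟩, ⟨_, rfl⟩]

theorem exists_notMem_range_mem_pathFrom (x : α) : ∃ a ∉ Set.range f, x ∈ pathFrom f hf a := by
  induction x using WellFoundedLT.induction with
  | _ x ih =>
    by_cases hx : x ∈ Set.range f
    · obtain ⟨u, rfl⟩ := hx
      obtain ⟨a, ha, hua⟩ := ih u (hf u)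
      exact ⟨a, ha, (mem_pathFrom_iff hf).mpr (((mem_pathFrom_iff hf).mp hua).tail ⟨u.2, rfl⟩)⟩
    · exact ⟨x, hx, (mem_pathFrom_iff hf).mpr .refl⟩

theorem eq_of_mem_pathFrom (hf_inj : Function.Injective f) {a b x : α} (ha : a ∉ Set.range f)
    (hb : b ∉ Set.range f) (hxa : x ∈ pathFrom f hf a) (hxb : x ∈ pathFrom f hf b) : a = b := by
  have h_unique : Relator.RightUnique (Function.swap (SuccRel f)) := by
    rintro x u w ⟨hu, rfl⟩ ⟨hw, hwu⟩
    exact congrArg Subtype.val (hf_inj hwu).symm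
  have h_start : ∀ {a b}, a ∉ Set.range f → ReflTransGen (SuccRel f) b a → a = b := by
    intro a b ha hba
    obtain rfl | ⟨c, -, hc, rfl⟩ := hba.cases_tail
    exacts [rfl, (ha ⟨_, rfl⟩).elim]
  rw [mem_pathFrom_iff, ← reflTransGen_swap] at hxa hxb
  rcases hxa.total_of_right_unique h_unique hxb with hab | hba
  · exact h_start ha (reflTransGen_swap.mp hab)
  · exact (h_start hb (reflTransGen_swap.mp hba)).symm

include hf in
theorem exists_pathCover (hf_inj : Function.Injective f) :
    ∃ P : Finset (List α),
      (∀ l ∈ P, l ≠ [] ∧ l.Nodup ∧ l.IsChain (SuccRel f)) ∧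
      (∀ l ∈ P, ∀ l' ∈ P, l ≠ l' → ∀ v, v ∈ l → v ∉ l') ∧
      (∀ v, ∃ l ∈ P, v ∈ l) ∧
      (∀ l ∈ P, ∀ v ∈ l.tail, v ∈ Set.range f) ∧
      (∀ l ∈ P, (∃ o ∈ O, l.getLast? = some o) ∧ ∀ v ∈ l.dropLast, v ∉ O) := by
  classical
  have := Fintype.ofFinite α
  refine ⟨(univ.filter (· ∉ Set.range f)).image (pathFrom f hf), ?_, ?_, ?_, ?_, ?_⟩
  all_goals simp only [mem_image, mem_filter, mem_univ, true_and, forall_exists_index, and_imp,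
    forall_apply_eq_imp_iff₂, exists_exists_and_eq_and]
  · intro a _
    obtain ⟨t, ht⟩ := exists_pathFrom_eq_cons hf a
    exact ⟨by simp [ht], nodup_pathFrom hf a, isChain_pathFrom hf a⟩
  · intro a ha b hb hab v hva hvb
    exact hab (congrArg _ (eq_of_mem_pathFrom hf hf_inj ha hb hva hvb))
  · exact exists_notMem_range_mem_pathFrom hf
  · exact fun a _ v => mem_range_of_mem_tail_pathFrom hf
  · exact fun a _ => ⟨getLast?_pathFrom hf a, fun v => notMem_of_mem_dropLast_pathFrom hf⟩

end PathCover

section Gflow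

variable {G : SimpleGraph V} [DecidableRel G.Adj] {I O : Finset V} {g : V → Finset V}
  {r : V → V → Prop}

omit [DecidableEq V] in
theorem mem_oddNbhd {S : Finset V} {v : V} : v ∈ oddNbhd G S ↔ Odd #(S.filter (G.Adj v ·)) := by
  simp [oddNbhd]

theorem oddNbhd_symmDiff (S T : Finset V) :
    oddNbhd G (S ∆ T) = oddNbhd G S ∆ oddNbhd G T := by
  ext v
  have h_filter : (S ∆ T).filter (G.Adj v ·) = S.filter (G.Adj v ·) ∆ T.filter (G.Adj v ·) := by
    ext u
    simp only [mem_filter, mem_symmDiff]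
    tauto
  simp only [mem_oddNbhd, mem_symmDiff, h_filter, odd_card_symmDiff_iff]
  tauto

omit [DecidableEq V] in
theorem IsGflow.mono {r' : V → V → Prop} [IsStrictOrder V r'] (h : IsGflow G I O g r)
    (hrr' : ∀ a b, r a b → r' a b) : IsGflow G I O g r' where
  strict := inferInstance
  notInput := h.notInput
  g1 u hu v hv := hrr' u v (h.g1 u hu v hv)
  g2 := h.g2
  g3 u hu v hv := (h.g3 u hu v hv).imp_right (hrr' u v)

theorem IsGflow.of_eq_or_eq_symmDiff (h : IsGflow G I O g r) (g' : V → Finset V)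
    (hg' : ∀ v ∉ O, g' v = g v ∨ ∃ u ∉ O, r v u ∧ g' v = g v ∆ g u) :
    IsGflow G I O g' r := by
  have := h.strict
  refine ⟨this, fun v hv y hy => ?_, fun v hv y hy => ?_, fun v hv => ?_, fun v hv y hy => ?_⟩
  · rcases hg' v hv with hv' | ⟨u, hu, hvu, hv'⟩ <;> rw [hv'] at hy
    · exact h.notInput v hv y hy
    · rcases mem_symmDiff.mp hy with ⟨hy, -⟩ | ⟨hy, -⟩
      exacts [h.notInput v hv y hy, h.notInput u hu y hy]
  · rcases hg' v hv with hv' | ⟨u, hu, hvu, hv'⟩ <;> rw [hv'] at hy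
    · exact h.g1 v hv y hy
    · rcases mem_symmDiff.mp hy with ⟨hy, -⟩ | ⟨hy, -⟩
      exacts [h.g1 v hv y hy, _root_.trans hvu (h.g1 u hu y hy)]
  · rcases hg' v hv with hv' | ⟨u, hu, hvu, hv'⟩ <;> rw [hv']
    · exact h.g2 v hv
    · refine oddNbhd_symmDiff (G := G) _ _ ▸ mem_symmDiff.mpr (Or.inl ⟨h.g2 v hv, fun hvu' => ?_⟩)
      rcases h.g3 u hu v hvu' with rfl | huv
      exacts [irrefl v hvu, asymm hvu huv]
  · rcases hg' v hv with hv' | ⟨u, hu, hvu, hv'⟩ <;> rw [hv'] at hy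
    · exact h.g3 v hv y hy
    · rw [oddNbhd_symmDiff, mem_symmDiff] at hy
      rcases hy with ⟨hy, -⟩ | ⟨hy, -⟩
      · exact h.g3 v hv y hy
      · rcases h.g3 u hu y hy with rfl | huy
        exacts [Or.inr hvu, Or.inr (_root_.trans hvu huy)]

end Gflow

section LinearOrder

variable [LinearOrder V] {G : SimpleGraph V} [DecidableRel G.Adj] {I O : Finset V}
  {g : V → Finset V}

open Classical in
noncomputable def laterNbhd (G : SimpleGraph V) (O : Finset V) (g : V → Finset V) (v : V) :
    Finset V :=
  {y | G.Adj v y ∧ ∃ u ∉ O, v ≤ u ∧ y ∈ g u}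

theorem IsGflow.card_le_card_biUnion_laterNbhd (h : IsGflow G I O g (· < ·))
    (s : Finset {v // v ∉ O}) : #s ≤ #(s.biUnion fun v => laterNbhd G O g v) := by
  classical
  set Y := s.biUnion fun v => laterNbhd G O g v
  have hY : ∀ m ∈ s, ∀ v : {v // v ∉ O}, m.1 ≤ v.1 → ∀ y ∈ g v, G.Adj m y → y ∈ Y :=
    fun m hm v hmv y hy hadj =>
      mem_biUnion.mpr ⟨m, hm, by simpa [laterNbhd] using ⟨hadj, v, v.2, hmv, hy⟩⟩
  let x : s → Y → ZMod 2 := fun v y => if (y : V) ∈ g v.1 then 1 else 0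
  let φ : s → (Y → ZMod 2) →ₗ[ZMod 2] ZMod 2 :=
    fun m => ∑ y ∈ univ.filter (fun y : Y => G.Adj m.1 y), LinearMap.proj y
  have h_eval : ∀ m v : s, m ≤ v → φ m (x v) = #((g v.1).filter (G.Adj m.1 ·)) := by
    intro m v hmv
    simp only [φ, x, LinearMap.sum_apply, LinearMap.proj_apply]
    simp only [sum_filter, ← ite_and]
    rw [sum_coe_sort Y fun y => if G.Adj m.1 y ∧ y ∈ g v.1 then (1 : ZMod 2) else 0, sum_boole]
    congr 2
    ext y
    simp only [mem_filter]
    exact ⟨fun ⟨_, hadj, hy⟩ => ⟨hy, hadj⟩,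
      fun ⟨hy, hadj⟩ => ⟨hY m m.2 v hmv y hy hadj, hadj, hy⟩⟩
  have h_li : LinearIndependent (ZMod 2) x := by
    refine linearIndependent_of_triangular x φ (fun m => ?_) (fun m v hmv => ?_)
    · rw [h_eval m m le_rfl, ZMod.natCast_eq_one_iff_odd.mpr (mem_oddNbhd.mp (h.g2 m.1 m.1.2))]
      exact one_ne_zero
    · rw [h_eval m v hmv.le, ZMod.natCast_eq_zero_iff_even, ← Nat.not_odd_iff_even, ← mem_oddNbhd]
      intro hmem
      rcases h.g3 v.1 v.1.2 m hmem with hvm | hvm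
      · exact hmv.ne (Subtype.ext (Subtype.ext hvm))
      · exact hmv.not_gt hvm
  simpa using h_li.fintype_card_le_finrank

theorem IsGflow.exists_injective_adj_mem (h : IsGflow G I O g (· < ·)) :
    ∃ g' : V → Finset V, IsGflow G I O g' (· < ·) ∧ ∃ f : {v // v ∉ O} → V,
      Function.Injective f ∧ ∀ v : {v // v ∉ O}, G.Adj v (f v) ∧ f v ∈ g' v := by
  classical
  obtain ⟨f, hf_inj, hf⟩ :=
    (all_card_le_biUnion_card_iff_exists_injective _).mp h.card_le_card_biUnion_laterNbhd
  simp only [laterNbhd, mem_filter, mem_univ, true_and] at hf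
  choose h_adj u hu hvu hfu using hf
  let g' : V → Finset V := fun v =>
    if hv : v ∈ O then g v else if f ⟨v, hv⟩ ∈ g v then g v else g v ∆ g (u ⟨v, hv⟩)
  refine ⟨g', h.of_eq_or_eq_symmDiff g' fun v hv => ?_, f, hf_inj, fun v => ⟨h_adj v, ?_⟩⟩
  · simp only [g', dif_neg hv]
    split_ifs with hfv
    · exact Or.inl rfl
    · have hne : u ⟨v, hv⟩ ≠ v := fun huv => hfv (by simpa [huv] using hfu ⟨v, hv⟩)
      exact Or.inr ⟨u ⟨v, hv⟩, hu _, (hvu ⟨v, hv⟩).lt_of_ne hne.symm, rfl⟩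
  · simp only [g', dif_neg v.2]
    split_ifs with hfv
    · exact hfv
    · exact mem_symmDiff.mpr (Or.inr ⟨hfu v, hfv⟩)

end LinearOrder

theorem gflow_path_cover (G : SimpleGraph V) [DecidableRel G.Adj] (I O : Finset V)
    (g : V → Finset V) (r : V → V → Prop) (h : IsGflow G I O g r) :
    ∃ P : Finset (List V),
      (∀ l ∈ P, l ≠ [] ∧ l.Nodup ∧ l.Chain' G.Adj) ∧
      (∀ l ∈ P, ∀ l' ∈ P, l ≠ l' → ∀ v, v ∈ l → v ∉ l') ∧
      (∀ v : V, ∃ l ∈ P, v ∈ l) ∧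
      (∀ l ∈ P, ∀ v ∈ l.tail, v ∉ I) ∧
      (∀ l ∈ P, (∃ o ∈ O, l.getLast? = some o) ∧ ∀ v ∈ l.dropLast, v ∉ O) ∧
      (∃ g' : V → Finset V, ∃ r' : V → V → Prop, IsGflow G I O g' r' ∧
        ∀ l ∈ P, l.Chain' fun x y => y ∈ g' x) := by
  have := h.strict
  obtain ⟨L, hL⟩ := exists_linearOrder_extending r
  let := L
  obtain ⟨g', hg', f, hf_inj, hf⟩ := (h.mono hL).exists_injective_adj_mem
  have hf_lt : ∀ v, v.1 < f v := fun v => hg'.g1 v v.2 _ (hf v).2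
  obtain ⟨P, hP_path, hP_disj, hP_cover, hP_tail, hP_last⟩ := exists_pathCover hf_lt hf_inj
  refine ⟨P, fun l hl => ?_, hP_disj, hP_cover, fun l hl v hv => ?_, hP_last,
    g', (· < ·), hg', fun l hl => ?_⟩
  · obtain ⟨hne, hnodup, hchain⟩ := hP_path l hl
    exact ⟨hne, hnodup, hchain.imp fun x y ⟨hx, hxy⟩ => hxy ▸ (hf ⟨x, hx⟩).1⟩
  · obtain ⟨u, rfl⟩ := hP_tail l hl v hv
    exact hg'.notInput u u.2 _ (hf u).2
  · exact (hP_path l hl).2.2.imp fun x y ⟨hx, hxy⟩ => hxy ▸ (hf ⟨x, hx⟩).2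
end

section
/- Let (f, ≺) be a flow on an open graph (G, I, O). Define a collection of paths by declaring v_0 → v_1 → ... → v_n to be a path iff v_n ∈ O, v_0 ∉ range(f) and f(v_i) = v_{i+1} for all i. Then this collection is a path cover of (G, I, O): it covers all vertices, the paths are vertex-disjoint, each path meets I at most at its initial vertex, and each path meets O only at its final vertex. -/
variable {V : Type*} [Fintype V] [DecidableEq V]

/-- A (causal) flow on the open graph `(G, I, O)`. -/
structure IsFlow (G : SimpleGraph V) [DecidableRel G.Adj] (I O : Finset V)
    (f : V → V) (r : V → V → Prop) : Prop where
  strict : IsStrictOrder V r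
  notInput : ∀ u, u ∉ O → f u ∉ I
  f1 : ∀ u, u ∉ O → r u (f u)
  f2 : ∀ u, u ∉ O → G.Adj u (f u)
  f3 : ∀ u, u ∉ O → ∀ v, G.Adj v (f u) → v = u ∨ r u v

/-- A maximal flow path: a nonempty list of vertices following the flow
function `f`, starting outside the range of `f`, ending in `O`, with no
intermediate vertex in `O`. -/
def FlowPath (f : V → V) (O : Finset V) (l : List V) : Prop :=
  l ≠ [] ∧ l.Chain' (fun x y => f x = y) ∧
  (∃ o ∈ O, l.getLast? = some o) ∧ (∀ v ∈ l.dropLast, v ∉ O) ∧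
  (∀ h ∈ l.head?, ∀ u, u ∉ O → f u ≠ h)

/-!
Every `u ∉ O` has the successor `f u ≻ u`, and `f` is injective on `Oᶜ` (if `f u = f u'`, each of
`u, u'` is adjacent to the other's image, so `u ≺ u'` and `u' ≺ u` unless `u = u'`). Since `≺` is
well founded in both directions on a finite set, following `f` forwards from any vertex reaches
`O`, and following the unique predecessors backwards reaches a vertex outside the range of `f`;
so every vertex lies on a flow path, and on only one. A flow path is `≺`-increasing, hence has no
repeated vertex, and every vertex after its head is some `f u`, which is not an input.
-/

open Function

variable {α : Type*} {f : α → α} {O : Finset α} {r : α → α → Prop}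

theorem IsFlow.injOn {G : SimpleGraph α} [DecidableRel G.Adj] {I : Finset α}
    (hf : IsFlow G I O f r) : Set.InjOn f (↑O)ᶜ := by
  have := hf.strict
  intro u hu u' hu' h
  rcases hf.f3 u hu u' (h ▸ hf.f2 u' hu') with rfl | h₁
  · rfl
  rcases hf.f3 u' hu' u (h.symm ▸ hf.f2 u hu) with rfl | h₂
  · rfl
  exact absurd h₂ (asymm h₁)

/-- The clauses of `FlowPath` other than the condition on the head, as an inductive predicate:
follow `f` from the head until the first vertex in `O`. -/
inductive IsForwardPath (f : α → α) (O : Finset α) : List α → Prop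
  | last {o : α} : o ∈ O → IsForwardPath f O [o]
  | cons {v : α} {l : List α} : v ∉ O → IsForwardPath f O (f v :: l) →
      IsForwardPath f O (v :: f v :: l)

theorem isForwardPath_iff {l : List α} :
    IsForwardPath f O l ↔ l.IsChain (fun x y => f x = y) ∧ (∃ o ∈ O, l.getLast? = some o) ∧
      ∀ v ∈ l.dropLast, v ∉ O := by
  constructor
  · intro h
    induction h with
    | last ho => exact ⟨.singleton _, ⟨_, ho, rfl⟩, by simp⟩
    | cons hv _ ih =>
      obtain ⟨hc, hlast, hdrop⟩ := ih
      refine ⟨hc.cons_cons rfl, by simpa using hlast, ?_⟩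
      rw [List.dropLast_cons_cons]
      exact List.forall_mem_cons.2 ⟨hv, hdrop⟩
  · rintro ⟨hc, hlast, hdrop⟩
    induction l with
    | nil => simp at hlast
    | cons v l ih =>
      cases l with
      | nil => obtain ⟨o, ho, h⟩ := hlast; cases h; exact .last ho
      | cons w l =>
        obtain ⟨rfl, hc⟩ := List.isChain_cons_cons.1 hc
        rw [List.dropLast_cons_cons, List.forall_mem_cons] at hdrop
        exact .cons hdrop.1 (ih hc (by simpa using hlast) hdrop.2)

theorem flowPath_iff {l : List α} :
    FlowPath f O l ↔ IsForwardPath f O l ∧ ∀ h ∈ l.head?, ∀ u, u ∉ O → f u ≠ h := by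
  rw [isForwardPath_iff, FlowPath]
  constructor
  · rintro ⟨-, hc, hlast, hdrop, hhead⟩
    exact ⟨⟨hc, hlast, hdrop⟩, hhead⟩
  · rintro ⟨⟨hc, ⟨o, ho, hlast⟩, hdrop⟩, hhead⟩
    exact ⟨by rintro rfl; simp at hlast, hc, ⟨o, ho, hlast⟩, hdrop, hhead⟩

namespace IsForwardPath

theorem eq_of_head?_eq {l l' : List α} (h : IsForwardPath f O l) (h' : IsForwardPath f O l')
    (hhead : l.head? = l'.head?) : l = l' := by
  induction h generalizing l' with
  | last ho =>
    cases h' with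
    | last => simpa using hhead
    | cons hv => simp only [List.head?_cons, Option.some_inj] at hhead; exact absurd (hhead ▸ ho) hv
  | cons hv _ ih =>
    cases h' with
    | last ho => simp only [List.head?_cons, Option.some_inj] at hhead; exact absurd (hhead ▸ ho) hv
    | cons _ h' =>
      simp only [List.head?_cons, Option.some_inj] at hhead
      subst hhead
      exact congrArg _ (ih h' rfl)

theorem exists_pred_of_mem_tail {l : List α} (h : IsForwardPath f O l) {v : α}
    (hv : v ∈ l.tail) : ∃ u ∈ l, u ∉ O ∧ f u = v := by
  induction h with
  | last => simp at hv
  | cons hu h ih =>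
    rcases List.mem_cons.1 hv with rfl | hv
    · exact ⟨_, List.mem_cons_self, hu, rfl⟩
    · obtain ⟨u, hul, hu⟩ := ih hv
      exact ⟨u, List.mem_cons_of_mem _ hul, hu⟩

theorem head?_eq_or_exists_pred {l : List α} (h : IsForwardPath f O l) {v : α} (hv : v ∈ l) :
    l.head? = some v ∨ ∃ u ∈ l, u ∉ O ∧ f u = v := by
  cases l with
  | nil => simp at hv
  | cons a t =>
    rcases List.mem_cons.1 hv with rfl | hv
    · exact .inl rfl
    · exact .inr (h.exists_pred_of_mem_tail hv)

theorem apply_mem {l : List α} (h : IsForwardPath f O l) {u : α} (hu : u ∈ l) (huO : u ∉ O) :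
    f u ∈ l := by
  induction h with
  | last ho => exact absurd ((List.mem_singleton.1 hu) ▸ ho) huO
  | cons _ _ ih =>
    rcases List.mem_cons.1 hu with rfl | hu
    · exact List.mem_cons_of_mem _ List.mem_cons_self
    · exact List.mem_cons_of_mem _ (ih hu)

theorem isChain (hfr : ∀ u ∉ O, r u (f u)) {l : List α} (h : IsForwardPath f O l) :
    l.IsChain r := by
  induction h with
  | last => exact .singleton _
  | cons hv _ ih => exact ih.cons_cons (hfr _ hv)

end IsForwardPath

theorem exists_isForwardPath (hwf : WellFounded (swap r)) (hfr : ∀ u ∉ O, r u (f u)) (v : α) :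
    ∃ l, IsForwardPath f O (v :: l) := by
  induction v using hwf.induction with
  | _ v ih =>
    by_cases hv : v ∈ O
    · exact ⟨[], .last hv⟩
    · obtain ⟨l, hl⟩ := ih (f v) (hfr v hv)
      exact ⟨f v :: l, .cons hv hl⟩

theorem exists_flowPath_mem (hwf : WellFounded r) (hwf' : WellFounded (swap r))
    (hfr : ∀ u ∉ O, r u (f u)) (v : α) : ∃ l, FlowPath f O l ∧ v ∈ l := by
  induction v using hwf.induction with
  | _ v ih =>
    by_cases hpred : ∃ u ∉ O, f u = v
    · obtain ⟨u, hu, rfl⟩ := hpred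
      obtain ⟨l, hl, hul⟩ := ih u (hfr u hu)
      exact ⟨l, hl, (flowPath_iff.1 hl).1.apply_mem hul hu⟩
    · push Not at hpred
      obtain ⟨l, hl⟩ := exists_isForwardPath hwf' hfr v
      refine ⟨v :: l, flowPath_iff.2 ⟨hl, ?_⟩, List.mem_cons_self⟩
      simpa using hpred

namespace FlowPath

theorem eq_of_mem (hwf : WellFounded r) (hfr : ∀ u ∉ O, r u (f u))
    (hinj : Set.InjOn f (↑O)ᶜ) {v : α} {l l' : List α} (hl : FlowPath f O l)
    (hl' : FlowPath f O l') (hv : v ∈ l) (hv' : v ∈ l') : l = l' := by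
  induction v using hwf.induction generalizing l l' with
  | _ v ih =>
    obtain ⟨hfp, hhead⟩ := flowPath_iff.1 hl
    obtain ⟨hfp', hhead'⟩ := flowPath_iff.1 hl'
    rcases hfp.head?_eq_or_exists_pred hv with hv | ⟨u, hu, huO, rfl⟩ <;>
      rcases hfp'.head?_eq_or_exists_pred hv' with hv' | ⟨u', hu', hu'O, hfu⟩
    · exact hfp.eq_of_head?_eq hfp' (hv.trans hv'.symm)
    · exact absurd hfu (hhead _ hv u' hu'O)
    · exact absurd rfl (hhead' _ hv' u huO)
    · obtain rfl : u = u' := hinj huO hu'O hfu.symm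
      exact ih u (hfr u huO) hl hl' hu hu'

theorem nodup [IsStrictOrder α r] (hfr : ∀ u ∉ O, r u (f u)) {l : List α}
    (hl : FlowPath f O l) : l.Nodup :=
  ((flowPath_iff.1 hl).1.isChain hfr |> List.isChain_iff_pairwise.1).imp (ne_of_irrefl ·)

theorem not_mem_of_mem_tail {I : Finset α} (hI : ∀ u ∉ O, f u ∉ I) {l : List α}
    (hl : FlowPath f O l) {v : α} (hv : v ∈ l.tail) : v ∉ I := by
  obtain ⟨u, -, hu, rfl⟩ := (flowPath_iff.1 hl).1.exists_pred_of_mem_tail hv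
  exact hI u hu

end FlowPath

theorem flow_paths_form_path_cover (G : SimpleGraph V) [DecidableRel G.Adj]
    (I O : Finset V) (f : V → V) (r : V → V → Prop) (hf : IsFlow G I O f r) :
    (∀ v : V, ∃ l, FlowPath f O l ∧ v ∈ l) ∧
    (∀ l l', FlowPath f O l → FlowPath f O l' → (∃ v, v ∈ l ∧ v ∈ l') → l = l') ∧
    (∀ l, FlowPath f O l → l.Nodup) ∧
    (∀ l, FlowPath f O l → ∀ v ∈ l.tail, v ∉ I) := by
  have := hf.strict
  have hwf : WellFounded r := Finite.wellFounded_of_trans_of_irrefl r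
  have hwf' : WellFounded (swap r) := Finite.wellFounded_of_trans_of_irrefl _
  exact ⟨exists_flowPath_mem hwf hwf' hf.f1,
    fun l l' hl hl' ⟨v, hv, hv'⟩ => hl.eq_of_mem hwf hf.f1 hf.injOn hl' hv hv',
    fun l hl => hl.nodup hf.f1, fun l hl _ hv => hl.not_mem_of_mem_tail hf.notInput hv⟩
end
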